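/- Iterated Wolff potential lower bound (Grigor'yan–Verbitsky type): let $p > 1$, $0 < \alpha p < n$, and $\omega$ a nonnegative Borel measure on $\mathbb{R}^n$. Then for every $r > 0$ and all $x \in \mathbb{R}^n$, $\mathbf{W}_{\alpha,p}\left((\mathbf{W}_{\alpha,p}\omega)^r \, d\omega\right)(x) \ge \kappa^{r/(p-1)} \left(\mathbf{W}_{\alpha,p}\omega(x)\right)^{r/(p-1)+1}$, where $\kappa > 0$ depends only on $n$ and $p$. -/

import Mathlib

open MeasureTheory Metric ENNReal

/-- The Wolff potential `W_{α,p}μ(x) = ∫₀^∞ (μ(B(x,t))/t^{n-αp})^{1/(p-1)} dt/t`. -/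
noncomputable def wolff (n : ℕ) (α p : ℝ)
    (μ : Measure (EuclideanSpace ℝ (Fin n))) (x : EuclideanSpace ℝ (Fin n)) : ℝ≥0∞ :=
  ∫⁻ t in Set.Ioi (0 : ℝ),
    (μ (ball x t) / ENNReal.ofReal (t ^ ((n : ℝ) - α * p))) ^ (1 / (p - 1)) /
      ENNReal.ofReal t

/-!
Fix `x`, let `k(t)` be the integrand of `W ω (x)` and `F(t) = ∫_t^∞ k`, so `W ω (x) = F(0)`.
For `|y - x| < t` and `s > t` we have `B(x, s) ⊆ B(y, 2s)`, so the dilation `s ↦ 2s` gives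
`W ω (y) ≥ c F(t)` with `c = 2^{-(n-αp)/(p-1)}`. Hence `ν(B(x,t)) ≥ (c F(t))^r ω(B(x,t))` for
`ν = (W ω)^r dω`, and the integrand of `W ν (x)` is at least `(c F(t))^q k(t)`, `q = r/(p-1)`.
Finally `∫_0^∞ F^q k ≥ F(0)^{q+1}/(q+1) ≥ e^{-q} F(0)^{q+1}`, by the layer cake formula for the
measure `k dt`: the set `{t > 0 | F(t) > s}` has `k dt`-measure at least `F(0) - s`.
-/

open Set Filter

theorem integral_sub_mul_rpow {b q : ℝ} (hb : 0 ≤ b) (hq : 0 < q) :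
    ∫ s in (0)..b, (b - s) * s ^ (q - 1) = b ^ (q + 1) / (q * (q + 1)) := by
  have hsplit : ∀ s ∈ uIcc 0 b, (b - s) * s ^ (q - 1) = b * s ^ (q - 1) - s ^ q := by
    intro s hs
    have hs0 : 0 ≤ s := by rw [uIcc_of_le hb] at hs; exact hs.1
    rw [sub_mul, mul_comm s, ← Real.rpow_add_one' hs0 (by linarith), sub_add_cancel]
  rw [intervalIntegral.integral_congr hsplit, intervalIntegral.integral_sub
      ((intervalIntegral.intervalIntegrable_rpow' (by linarith)).const_mul b)
      (intervalIntegral.intervalIntegrable_rpow' (by linarith)),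
    intervalIntegral.integral_const_mul, integral_rpow (Or.inl (by linarith)),
    integral_rpow (Or.inl (by linarith)), sub_add_cancel,
    Real.zero_rpow hq.ne', Real.zero_rpow (by linarith), Real.rpow_add_one' hb (by linarith)]
  field_simp
  ring

theorem ofReal_mul_lintegral_sub_mul_rpow {b q : ℝ} (hb : 0 ≤ b) (hq : 0 < q) :
    ENNReal.ofReal q * ∫⁻ s in Ioo 0 b,
        (ENNReal.ofReal b - ENNReal.ofReal s) * ENNReal.ofReal (s ^ (q - 1))
      = ENNReal.ofReal (b ^ (q + 1) / (q + 1)) := by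
  have hnonneg : ∀ s ∈ Ioo 0 b, 0 ≤ (b - s) * s ^ (q - 1) := fun s hs =>
    mul_nonneg (by linarith [hs.2]) (Real.rpow_nonneg hs.1.le _)
  have hint : IntegrableOn (fun s => (b - s) * s ^ (q - 1)) (Ioc 0 b) :=
    (intervalIntegrable_iff_integrableOn_Ioc_of_le hb).1
      ((intervalIntegral.intervalIntegrable_rpow' (by linarith)).continuousOn_mul
        (continuousOn_const.sub continuousOn_id))
  rw [setLIntegral_congr_fun measurableSet_Ioo fun s hs => by
      rw [← ENNReal.ofReal_sub _ hs.1.le, ← ENNReal.ofReal_mul (by linarith [hs.2])],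
    ← ofReal_integral_eq_lintegral_ofReal (hint.mono_set Ioo_subset_Ioc_self)
      ((ae_restrict_iff' measurableSet_Ioo).2 (Eventually.of_forall hnonneg)),
    ← integral_Ioc_eq_integral_Ioo, ← intervalIntegral.integral_of_le hb,
    integral_sub_mul_rpow hb hq, ← ENNReal.ofReal_mul hq.le]
  congr 1
  field_simp

section TailMeasure

variable {μ : Measure ℝ}

theorem measurable_measure_Ioi : Measurable fun t => μ (Ioi t) :=
  Antitone.measurable fun _ _ h => measure_mono (Ioi_subset_Ioi h)

theorem measure_Ioi_le_of_forall_lt {t₀ : ℝ} {c : ℝ≥0∞} (h : ∀ t, t₀ < t → μ (Ioi t) ≤ c) :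
    μ (Ioi t₀) ≤ c := by
  obtain ⟨u, hu_anti, hu_gt, hu_lim⟩ := exists_seq_strictAnti_tendsto t₀
  have hIoi : Ioi t₀ = ⋃ k, Ioi (u k) := by
    refine Subset.antisymm (fun t ht => ?_) (iUnion_subset fun k => Ioi_subset_Ioi (hu_gt k).le)
    obtain ⟨k, hk⟩ := (hu_lim.eventually (gt_mem_nhds ht)).exists
    exact mem_iUnion.2 ⟨k, hk⟩
  have hmono : Monotone fun k => Ioi (u k) := fun _ _ hkl => Ioi_subset_Ioi (hu_anti.antitone hkl)
  rw [hIoi, hmono.measure_iUnion]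
  exact iSup_le fun k => h _ (hu_gt k)

theorem measure_Ioi_le_measure_inter_add [NullSingletonClass μ] (a : ℝ) (c : ℝ≥0∞) :
    μ (Ioi a) ≤ μ ({t | c < μ (Ioi t)} ∩ Ioi a) + c := by
  set B := {t | μ (Ioi t) ≤ c} ∩ Ioi a
  have hB : μ B ≤ c := by
    rcases B.eq_empty_or_nonempty with hempty | hne
    · simp [hempty]
    have hbdd : BddBelow B := ⟨a, fun t ht => ht.2.le⟩
    calc μ B ≤ μ (Ici (sInf B)) := measure_mono fun t ht => csInf_le hbdd ht
      _ = μ (Ioi (sInf B)) := measure_congr Ioi_ae_eq_Ici.symm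
      _ ≤ c := measure_Ioi_le_of_forall_lt fun t ht => by
          obtain ⟨u, hu, hut⟩ := exists_lt_of_csInf_lt hne ht
          exact (measure_mono (Ioi_subset_Ioi hut.le)).trans hu.1
  calc μ (Ioi a) ≤ μ (({t | c < μ (Ioi t)} ∩ Ioi a) ∪ B) :=
        measure_mono fun t ht => (lt_or_ge c (μ (Ioi t))).imp (⟨·, ht⟩) (⟨·, ht⟩)
    _ ≤ μ ({t | c < μ (Ioi t)} ∩ Ioi a) + c := (measure_union_le _ _).trans (by gcongr)

theorem ofReal_rpow_div_le_lintegral_measure_Ioi_rpow [NullSingletonClass μ] {a b q : ℝ}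
    (hb : 0 ≤ b) (hq : 0 < q) (hbμ : ENNReal.ofReal b ≤ μ (Ioi a)) :
    ENNReal.ofReal (b ^ (q + 1) / (q + 1)) ≤ ∫⁻ t in Ioi a, μ (Ioi t) ^ q ∂μ := by
  -- truncated at `b`, so that the real-valued layer cake formula applies where `μ (Ioi t) = ∞`
  set f : ℝ → ℝ := fun t => (min (μ (Ioi t)) (ENNReal.ofReal b)).toReal
  have hf_ne_top : ∀ t, min (μ (Ioi t)) (ENNReal.ofReal b) ≠ ∞ := fun t =>
    ne_top_of_le_ne_top ENNReal.ofReal_ne_top (min_le_right _ _)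
  have hlevel : ∀ s ∈ Ioo 0 b,
      ENNReal.ofReal b - ENNReal.ofReal s ≤ μ.restrict (Ioi a) {t | s < f t} := by
    intro s hs
    rw [Measure.restrict_apply' measurableSet_Ioi, tsub_le_iff_right]
    refine hbμ.trans ((measure_Ioi_le_measure_inter_add a (ENNReal.ofReal s)).trans ?_)
    refine add_le_add_left (measure_mono (μ := μ) (inter_subset_inter_left _ fun t ht => ?_)) _
    change s < f t
    rw [← ENNReal.ofReal_lt_iff_lt_toReal hs.1.le (hf_ne_top t), lt_min_iff,
      ENNReal.ofReal_lt_ofReal_iff_of_nonneg hs.1.le]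
    exact ⟨ht, hs.2⟩
  calc ENNReal.ofReal (b ^ (q + 1) / (q + 1))
      = ENNReal.ofReal q * ∫⁻ s in Ioo 0 b,
          (ENNReal.ofReal b - ENNReal.ofReal s) * ENNReal.ofReal (s ^ (q - 1)) :=
        (ofReal_mul_lintegral_sub_mul_rpow hb hq).symm
    _ ≤ ENNReal.ofReal q * ∫⁻ s in Ioi 0,
          μ.restrict (Ioi a) {t | s < f t} * ENNReal.ofReal (s ^ (q - 1)) := by
        gcongr ENNReal.ofReal q * ?_
        exact (setLIntegral_mono' measurableSet_Ioo fun s hs => by gcongr; exact hlevel s hs).trans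
          (lintegral_mono_set Ioo_subset_Ioi_self)
    _ = ∫⁻ t in Ioi a, ENNReal.ofReal (f t ^ q) ∂μ :=
        (lintegral_rpow_eq_lintegral_meas_lt_mul _ (Eventually.of_forall fun _ => toReal_nonneg)
          (measurable_measure_Ioi.min measurable_const).ennreal_toReal.aemeasurable hq).symm
    _ ≤ ∫⁻ t in Ioi a, μ (Ioi t) ^ q ∂μ := by
        refine lintegral_mono fun t => ?_
        rw [← ENNReal.ofReal_rpow_of_nonneg toReal_nonneg hq.le, ofReal_toReal (hf_ne_top t)]
        gcongr
        exact min_le_left _ _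

theorem measure_Ioi_rpow_le_mul_lintegral [NullSingletonClass μ] (a : ℝ) {q : ℝ} (hq : 0 < q) :
    μ (Ioi a) ^ (q + 1) ≤ ENNReal.ofReal (q + 1) * ∫⁻ t in Ioi a, μ (Ioi t) ^ q ∂μ := by
  have hq1 : 0 < q + 1 := by linarith
  rw [← ENNReal.le_rpow_inv_iff hq1]
  refine le_of_forall_nnreal_lt fun b hb => ?_
  rw [ENNReal.le_rpow_inv_iff hq1]
  have hbμ : ENNReal.ofReal b ≤ μ (Ioi a) := by rw [ofReal_coe_nnreal]; exact hb.le
  calc (b : ℝ≥0∞) ^ (q + 1)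
      = ENNReal.ofReal (q + 1) * ENNReal.ofReal (b ^ (q + 1) / (q + 1)) := by
        rw [← ENNReal.ofReal_mul hq1.le, mul_div_cancel₀ _ hq1.ne', ← ofReal_coe_nnreal,
          ENNReal.ofReal_rpow_of_nonneg b.coe_nonneg hq1.le]
    _ ≤ _ := by gcongr; exact ofReal_rpow_div_le_lintegral_measure_Ioi_rpow b.coe_nonneg hq hbμ

end TailMeasure

theorem lintegral_Ioi_mul_left {c : ℝ} (hc : 0 < c) (f : ℝ → ℝ≥0∞) (t : ℝ) :
    ∫⁻ s in Ioi (c * t), f s = ∫⁻ u in Ioi t, ENNReal.ofReal c * f (c * u) := by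
  rw [← image_mul_left_Ioi hc, lintegral_image_eq_lintegral_abs_deriv_mul (f' := fun _ => c)
    measurableSet_Ioi (fun u _ => by simpa using ((hasDerivAt_id u).const_mul c).hasDerivWithinAt)
    (mul_right_injective₀ hc.ne').injOn, abs_of_pos hc]

theorem rpow_div_ofReal_mul_rpow (X : ℝ≥0∞) {a δ c u : ℝ} (hc : 0 < c) (hu : 0 < u)
    (hδ : 0 ≤ δ) :
    (X / ENNReal.ofReal ((c * u) ^ a)) ^ δ
      = ENNReal.ofReal (c ^ (-(a * δ))) * (X / ENNReal.ofReal (u ^ a)) ^ δ := by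
  have hsplit : ENNReal.ofReal ((c * u) ^ a)
      = ENNReal.ofReal (u ^ a) * (ENNReal.ofReal (c ^ (-a)))⁻¹ := by
    rw [Real.mul_rpow hc.le hu.le, ENNReal.ofReal_mul (by positivity), Real.rpow_neg hc.le,
      ENNReal.ofReal_inv_of_pos (by positivity), inv_inv, mul_comm]
  rw [hsplit, div_eq_mul_inv, div_eq_mul_inv,
    ENNReal.mul_inv (Or.inr (by simp; positivity)) (Or.inr (by simp)), inv_inv, ← mul_assoc,
    ENNReal.mul_rpow_of_nonneg _ _ hδ, ENNReal.ofReal_rpow_of_pos (by positivity),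
    ← Real.rpow_mul hc.le, neg_mul, mul_comm]

theorem mul_measure_le_withDensity {X : Type*} [MeasurableSpace X] {μ : Measure X}
    {f : X → ℝ≥0∞} {s : Set X} {c : ℝ≥0∞} (hs : MeasurableSet s) (h : ∀ y ∈ s, c ≤ f y) :
    c * μ s ≤ μ.withDensity f s := by
  rw [withDensity_apply _ hs, ← setLIntegral_const]
  exact setLIntegral_mono' hs h

noncomputable def wolffKernel (n : ℕ) (α p : ℝ) (μ : Measure (EuclideanSpace ℝ (Fin n)))
    (x : EuclideanSpace ℝ (Fin n)) (t : ℝ) : ℝ≥0∞ :=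
  (μ (ball x t) / ENNReal.ofReal (t ^ ((n : ℝ) - α * p))) ^ (1 / (p - 1)) / ENNReal.ofReal t

section Wolff

variable {n : ℕ} {α p : ℝ} {μ ν : Measure (EuclideanSpace ℝ (Fin n))}
  {x y : EuclideanSpace ℝ (Fin n)}

theorem wolff_eq_lintegral_wolffKernel :
    wolff n α p μ x = ∫⁻ t in Ioi 0, wolffKernel n α p μ x t := rfl

theorem measurable_wolffKernel : Measurable (wolffKernel n α p μ x) := by
  have hball : Measurable fun t => μ (ball x t) :=
    Monotone.measurable fun _ _ h => measure_mono (ball_subset_ball h)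
  exact ((hball.div (ENNReal.measurable_ofReal.comp (measurable_id.pow_const _))).pow_const _).div
    ENNReal.measurable_ofReal

theorem rpow_mul_wolffKernel_le (hp : 1 < p) {C : ℝ≥0∞} {t : ℝ}
    (h : C * μ (ball x t) ≤ ν (ball x t)) :
    C ^ (1 / (p - 1)) * wolffKernel n α p μ x t ≤ wolffKernel n α p ν x t := by
  have hδ : 0 ≤ 1 / (p - 1) := one_div_nonneg.2 (by linarith)
  rw [wolffKernel, wolffKernel, ← mul_div_assoc, ← ENNReal.mul_rpow_of_nonneg _ _ hδ,
    ← mul_div_assoc]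
  gcongr

theorem ofReal_rpow_mul_wolffKernel_le (hp : 1 < p) {c u : ℝ} (hc : 0 < c) (hu : 0 < u)
    (hball : ball x u ⊆ ball y (c * u)) :
    ENNReal.ofReal (c ^ (-(((n : ℝ) - α * p) / (p - 1)))) * wolffKernel n α p μ x u
      ≤ ENNReal.ofReal c * wolffKernel n α p μ y (c * u) := by
  have hδ : 0 ≤ 1 / (p - 1) := one_div_nonneg.2 (by linarith)
  have hcancel (Z : ℝ≥0∞) :
      ENNReal.ofReal c * (Z / ENNReal.ofReal (c * u)) = Z / ENNReal.ofReal u := by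
    rw [ENNReal.ofReal_mul hc.le, ← mul_div_assoc,
      ENNReal.mul_div_mul_left _ _ (by simpa using hc) ENNReal.ofReal_ne_top]
  rw [wolffKernel, wolffKernel, hcancel, rpow_div_ofReal_mul_rpow _ hc hu hδ, mul_one_div,
    mul_div_assoc]
  gcongr

theorem ofReal_two_rpow_mul_lintegral_wolffKernel_le (hp : 1 < p) {t : ℝ} (hy : y ∈ ball x t) :
    ENNReal.ofReal (2 ^ (-(((n : ℝ) - α * p) / (p - 1))))
        * ∫⁻ u in Ioi t, wolffKernel n α p μ x u
      ≤ wolff n α p μ y := by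
  have ht : 0 < t := pos_of_mem_ball hy
  rw [← lintegral_const_mul _ measurable_wolffKernel]
  calc ∫⁻ u in Ioi t, ENNReal.ofReal (2 ^ (-(((n : ℝ) - α * p) / (p - 1))))
          * wolffKernel n α p μ x u
      ≤ ∫⁻ u in Ioi t, ENNReal.ofReal 2 * wolffKernel n α p μ y (2 * u) := by
        refine setLIntegral_mono' measurableSet_Ioi fun u hu => ?_
        refine ofReal_rpow_mul_wolffKernel_le hp two_pos (ht.trans hu) (ball_subset_ball' ?_)
        rw [mem_ball, dist_comm] at hy
        linarith [hu.out]
    _ = ∫⁻ s in Ioi (2 * t), wolffKernel n α p μ y s := (lintegral_Ioi_mul_left two_pos _ t).symm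
    _ ≤ wolff n α p μ y := lintegral_mono_set (Ioi_subset_Ioi (by positivity))

theorem rpow_mul_wolffKernel_le_wolffKernel_withDensity (hp : 1 < p) {r : ℝ} (hr : 0 ≤ r)
    (t : ℝ) :
    (ENNReal.ofReal (2 ^ (-(((n : ℝ) - α * p) / (p - 1))))
        * ∫⁻ u in Ioi t, wolffKernel n α p μ x u) ^ (r / (p - 1)) * wolffKernel n α p μ x t
      ≤ wolffKernel n α p (μ.withDensity fun y => wolff n α p μ y ^ r) x t := by
  rw [← mul_one_div r, ENNReal.rpow_mul]
  refine rpow_mul_wolffKernel_le hp (mul_measure_le_withDensity measurableSet_ball fun y hy => ?_)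
  gcongr
  exact ofReal_two_rpow_mul_lintegral_wolffKernel_le hp hy

end Wolff

theorem ofReal_exp_neg_one_rpow_mul_le_one (q : ℝ) :
    ENNReal.ofReal (Real.exp (-1)) ^ q * ENNReal.ofReal (q + 1) ≤ 1 := by
  rw [ENNReal.ofReal_rpow_of_pos (Real.exp_pos _), ← ENNReal.ofReal_mul (by positivity),
    ← Real.exp_mul, ENNReal.ofReal_le_one, neg_one_mul, Real.exp_neg,
    inv_mul_le_iff₀ (Real.exp_pos _), mul_one]
  linarith [Real.add_one_le_exp q]

theorem wolff_iterated_lower_bound_general (n : ℕ) (α p : ℝ) (hp : 1 < p) :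
    ∃ κ : ℝ, 0 < κ ∧
      ∀ (ω : Measure (EuclideanSpace ℝ (Fin n))) (r : ℝ), 0 < r →
        ∀ x, ENNReal.ofReal κ ^ (r / (p - 1)) * (wolff n α p ω x) ^ (r / (p - 1) + 1) ≤
          wolff n α p (ω.withDensity fun y => (wolff n α p ω y) ^ r) x := by
  set c : ℝ := 2 ^ (-(((n : ℝ) - α * p) / (p - 1)))
  refine ⟨c * Real.exp (-1), by positivity, fun ω r hr x => ?_⟩
  set q := r / (p - 1)
  have hq : 0 < q := div_pos hr (by linarith)
  set μ : Measure ℝ := volume.withDensity (wolffKernel n α p ω x)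
  have hμ (t : ℝ) : μ (Ioi t) = ∫⁻ u in Ioi t, wolffKernel n α p ω x u :=
    withDensity_apply _ measurableSet_Ioi
  calc ENNReal.ofReal (c * Real.exp (-1)) ^ q * wolff n α p ω x ^ (q + 1)
      = ENNReal.ofReal c ^ q * (ENNReal.ofReal (Real.exp (-1)) ^ q * μ (Ioi 0) ^ (q + 1)) := by
        rw [hμ, ENNReal.ofReal_mul (by positivity), ENNReal.mul_rpow_of_nonneg _ _ hq.le, mul_assoc,
          wolff_eq_lintegral_wolffKernel]
    _ ≤ ENNReal.ofReal c ^ q * ∫⁻ t in Ioi 0, μ (Ioi t) ^ q ∂μ := by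
        gcongr ENNReal.ofReal c ^ q * ?_
        grw [measure_Ioi_rpow_le_mul_lintegral 0 hq, ← mul_assoc,
          ofReal_exp_neg_one_rpow_mul_le_one, one_mul]
    _ = ∫⁻ t in Ioi 0, (ENNReal.ofReal c * μ (Ioi t)) ^ q * wolffKernel n α p ω x t := by
        rw [setLIntegral_withDensity_eq_setLIntegral_mul _ measurable_wolffKernel
            (measurable_measure_Ioi.pow_const q) measurableSet_Ioi,
          ← lintegral_const_mul' _ _ (ENNReal.rpow_ne_top_of_nonneg hq.le ENNReal.ofReal_ne_top)]
        refine lintegral_congr fun t => ?_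
        simp only [Pi.mul_apply, ENNReal.mul_rpow_of_nonneg _ _ hq.le]
        ring
    _ ≤ wolff n α p (ω.withDensity fun y => wolff n α p ω y ^ r) x :=
        setLIntegral_mono' measurableSet_Ioi fun t _ => by
          rw [hμ]; exact rpow_mul_wolffKernel_le_wolffKernel_withDensity hp hr.le t

theorem wolff_iterated_lower_bound (n : ℕ) (α p : ℝ) (hp : 1 < p) (hαp : 0 < α * p)
    (hαpn : α * p < n) :
    ∃ κ : ℝ, 0 < κ ∧
      ∀ (ω : Measure (EuclideanSpace ℝ (Fin n))) (r : ℝ), 0 < r →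
        ∀ x, ENNReal.ofReal κ ^ (r / (p - 1)) * (wolff n α p ω x) ^ (r / (p - 1) + 1) ≤
          wolff n α p (ω.withDensity fun y => (wolff n α p ω y) ^ r) x :=
  wolff_iterated_lower_bound_general n α p hp
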